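/- arXiv:1011.3251 — 7 statements merged into one kernel-verified Lean document; each statement's English description precedes it below -/
import Mathlib

section
/- Fix integers N ≥ 2 and 1 ≤ M < N. Let G : ℝ^N → (N×N real matrices) be a C¹ map with G(x) symmetric and invertible for every x. Let Ω₁, …, Ω_N : ℝ^N → ℝ^N be C¹ maps such that for every x the N×N matrix M(x) whose j-th row is Ω_j(x) is invertible. Let λ_{M+1}, …, λ_N : ℝ^N → ℝ be C¹ and set λ_j ≡ 0 for 1 ≤ j ≤ M. Define v : ℝ^N → ℝ^N by v(x) = M(x)⁻¹ λ(x), i.e. ⟨Ω_j(x), v(x)⟩ = λ_j(x) for all j; define p(x) = G(x) v(x), τ_k(x) = Σ_{j=1}^N v_j(x) (∂_{x_j} p_k(x) − ∂_{x_k} p_j(x)) for k = 1,…,N, and Λ(x) = (M(x)ᵀ)⁻¹ τ(x). Assume Λ_j(x) = 0 for all x ∈ ℝ^N and all j = M+1, …, N. Then every solution x : I → ℝ^N of ẋ = v(x) satisfies the constraints ⟨Ω_j(x(t)), ẋ(t)⟩ = 0 for j = 1, …, M and, for every k = 1, …, N and every t ∈ I, the Lagrange-type equations d/dt[ Σ_j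 G_{kj}(x(t)) ẋ_j(t) ] − ½ Σ_{i,j} (∂_{x_k} G_{ij})(x(t)) ẋ_i(t) ẋ_j(t) = ∂_{x_k}( ½⟨v, G v⟩ )(x(t)) + Σ_{j=1}^{M} Λ_j(x(t)) · (Ω_j(x(t)))_k. -/
open Real Set

noncomputable section

/-- Partial derivative of a scalar function on `ℝ^n` in the `k`-th coordinate direction. -/
def pd (n : ℕ) (k : Fin n) (f : (Fin n → ℝ) → ℝ) (x : Fin n → ℝ) : ℝ :=
  fderiv ℝ f x (Pi.single k 1)

/-!
Along a solution, `d/dt p_k(x(t)) = Σ_j v_j ∂_j p_k`. Write `∂_j p_k = (∂_j p_k - ∂_k p_j) + ∂_k p_j`.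
The first part sums to `τ_k = Σ_j Ω_{jk} Λ_j`, which is the reaction force because `Λ_j = 0` for
`j > M`. The second part is `⟨v, ∂_k (G v)⟩ = ⟨v, (∂_k G) v⟩ + ⟨v, G ∂_k v⟩`, and the symmetry of `G`
gives `∂_k ½⟨v, G v⟩ = ½⟨v, (∂_k G) v⟩ + ⟨v, G ∂_k v⟩`, leaving the term `½⟨v, (∂_k G) v⟩`.
The constraints are the equations `⟨Ω_j, v⟩ = λ_j = 0` for `j ≤ M`.
-/

open Finset

lemma fderiv_apply_eq_sum_pd {n : ℕ} (f : (Fin n → ℝ) → ℝ) (x u : Fin n → ℝ) :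
    fderiv ℝ f x u = ∑ j, u j * pd n j f x := by
  conv_lhs => rw [← univ_sum_single u]
  refine (map_sum _ _ _).trans (sum_congr rfl fun j _ => ?_)
  rw [pd, ← smul_eq_mul, ← map_smul, ← Pi.single_smul', smul_eq_mul, mul_one]

section DirectionalDerivatives

variable {E ι : Type*} [NormedAddCommGroup E] [NormedSpace ℝ E] [Fintype ι] {x u : E}

lemma fderiv_sum_mul_apply {f g : E → ι → ℝ}
    (hf : ∀ i, DifferentiableAt ℝ (fun y => f y i) x)
    (hg : ∀ i, DifferentiableAt ℝ (fun y => g y i) x) :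
    fderiv ℝ (fun y => ∑ i, f y i * g y i) x u
      = ∑ i, (fderiv ℝ (fun y => f y i) x u * g x i + f x i * fderiv ℝ (fun y => g y i) x u) := by
  rw [fderiv_fun_sum (A := fun i y => f y i * g y i) fun i _ => (hf i).mul (hg i)]
  simp only [FunLike.coe_sum, Finset.sum_apply, fderiv_fun_mul (hf _) (hg _),
    add_apply, smul_apply, smul_eq_mul]
  exact sum_congr rfl fun i _ => by ring

lemma sum_mul_fderiv_mulVec_apply {G : E → Matrix ι ι ℝ} {v : E → ι → ℝ}
    (hG : ∀ i j, DifferentiableAt ℝ (fun y => G y i j) x)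
    (hv : ∀ i, DifferentiableAt ℝ (fun y => v y i) x) :
    ∑ i, v x i * fderiv ℝ (fun y => ∑ j, G y i j * v y j) x u
      = ∑ i, ∑ j, fderiv ℝ (fun y => G y i j) x u * v x i * v x j
        + ∑ i, ∑ j, v x i * G x i j * fderiv ℝ (fun y => v y j) x u := by
  simp only [fderiv_sum_mul_apply (f := fun y => G y _) (hG _) hv, mul_add, sum_add_distrib,
    mul_sum]
  congr 1 <;> exact sum_congr rfl fun i _ => sum_congr rfl fun j _ => by ring

lemma fderiv_quadForm_apply {G : E → Matrix ι ι ℝ} {v : E → ι → ℝ}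
    (hG : ∀ i j, DifferentiableAt ℝ (fun y => G y i j) x)
    (hv : ∀ i, DifferentiableAt ℝ (fun y => v y i) x) (hGx : (G x).IsSymm) :
    fderiv ℝ (fun y => ∑ i, ∑ j, v y i * G y i j * v y j) x u
      = ∑ i, ∑ j, fderiv ℝ (fun y => G y i j) x u * v x i * v x j
        + 2 * ∑ i, ∑ j, v x i * G x i j * fderiv ℝ (fun y => v y j) x u := by
  have hswap : ∑ i, fderiv ℝ (fun y => v y i) x u * ∑ j, G x i j * v x j
      = ∑ i, ∑ j, v x i * G x i j * fderiv ℝ (fun y => v y j) x u := by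
    simp only [mul_sum]
    rw [sum_comm]
    exact sum_congr rfl fun i _ => sum_congr rfl fun j _ => by rw [hGx.apply i j]; ring
  have hform : (fun y => ∑ i, ∑ j, v y i * G y i j * v y j)
      = fun y => ∑ i, v y i * ∑ j, G y i j * v y j := by
    simp only [mul_sum, mul_assoc]
  rw [hform, fderiv_sum_mul_apply (g := fun y i => ∑ j, G y i j * v y j) hv
    fun i => .fun_sum fun j _ => (hG i j).mul (hv j)]
  rw [sum_add_distrib, hswap, sum_mul_fderiv_mulVec_apply hG hv]
  ring

lemma sum_mul_fderiv_mulVec_eq_fderiv_half_quadForm {G : E → Matrix ι ι ℝ} {v : E → ι → ℝ}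
    (hG : ∀ i j, DifferentiableAt ℝ (fun y => G y i j) x)
    (hv : ∀ i, DifferentiableAt ℝ (fun y => v y i) x) (hGx : (G x).IsSymm) :
    ∑ i, v x i * fderiv ℝ (fun y => ∑ j, G y i j * v y j) x u
      = (1 / 2) * ∑ i, ∑ j, fderiv ℝ (fun y => G y i j) x u * v x i * v x j
        + fderiv ℝ (fun y => (1 / 2) * ∑ i, ∑ j, v y i * G y i j * v y j) x u := by
  have hquad : DifferentiableAt ℝ (fun y => ∑ i, ∑ j, v y i * G y i j * v y j) x :=
    .fun_sum fun i _ => .fun_sum fun j _ => ((hv i).mul (hG i j)).mul (hv j)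
  rw [fderiv_const_mul hquad, smul_apply, smul_eq_mul, fderiv_quadForm_apply hG hv hGx,
    sum_mul_fderiv_mulVec_apply hG hv]
  ring

end DirectionalDerivatives

theorem cartesian_approach_main_general
    (n m : ℕ)
    -- the Riemann metric G, C¹, symmetric, invertible
    (G : (Fin n → ℝ) → Matrix (Fin n) (Fin n) ℝ)
    (hGC : ∀ i j, ContDiff ℝ 1 (fun x => G x i j))
    (hGsymm : ∀ x i j, G x i j = G x j i)
    -- the 1-forms Ω_j, C¹, with the matrix M(x) whose j-th row is Ω_j(x) invertible
    (Ω : Fin n → (Fin n → ℝ) → (Fin n → ℝ))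
    -- the functions λ_j : zero for j ≤ M, C¹ for j > M
    (lam : Fin n → (Fin n → ℝ) → ℝ)
    (hlam0 : ∀ j : Fin n, (j : ℕ) < m → lam j = 0)
    -- the Cartesian vector field v = M(x)⁻¹ λ(x), i.e. ⟨Ω_j(x), v(x)⟩ = λ_j(x)
    (v : (Fin n → ℝ) → (Fin n → ℝ))
    (hvC : ContDiff ℝ 1 v)
    (hv : ∀ x, ∀ j : Fin n, (∑ k, Ω j x k * v x k) = lam j x)
    -- the momentum p = G v
    (p : Fin n → (Fin n → ℝ) → ℝ)
    (hp : ∀ k x, p k x = ∑ j, G x k j * v x j)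
    -- τ_k = Σ_j v_j (∂_j p_k − ∂_k p_j)
    (τ : Fin n → (Fin n → ℝ) → ℝ)
    (hτ : ∀ k x, τ k x = ∑ j, v x j * (pd n j (p k) x - pd n k (p j) x))
    -- Λ = (M(x)ᵀ)⁻¹ τ(x), i.e. Σ_j (Ω_j(x))_k Λ_j(x) = τ_k(x)
    (Λ : Fin n → (Fin n → ℝ) → ℝ)
    (hΛ : ∀ x, ∀ k : Fin n, (∑ j, Ω j x k * Λ j x) = τ k x)
    -- the invariance condition Λ_j ≡ 0 for j > M
    (hΛ0 : ∀ x, ∀ j : Fin n, m ≤ (j : ℕ) → Λ j x = 0)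
    -- a solution of ẋ = v(x) on an open interval
    (t₁ t₂ : ℝ) (x : ℝ → (Fin n → ℝ))
    (hx : ∀ t ∈ Ioo t₁ t₂, HasDerivAt x (v (x t)) t) :
    -- the constraints ⟨Ω_j(x(t)), ẋ(t)⟩ = 0 hold for j = 1,…,M
    (∀ t ∈ Ioo t₁ t₂, ∀ j : Fin n, (j : ℕ) < m →
      (∑ k, Ω j (x t) k * v (x t) k) = 0) ∧
    -- and the Lagrange-type equations hold
    (∀ t ∈ Ioo t₁ t₂, ∀ k : Fin n,
      HasDerivAt (fun s => p k (x s))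
        ((1 / 2) * ∑ i, ∑ j, pd n k (fun y => G y i j) (x t) * v (x t) i * v (x t) j
          + pd n k (fun y => (1 / 2) * ∑ i, ∑ j, v y i * G y i j * v y j) (x t)
          + ∑ j : Fin n, (if (j : ℕ) < m then Λ j (x t) * Ω j (x t) k else 0)) t) := by
  have hvd : ∀ y j, DifferentiableAt ℝ (fun z => v z j) y := fun y j =>
    ((contDiff_pi.mp hvC j).differentiable one_ne_zero) y
  have hGd : ∀ y i j, DifferentiableAt ℝ (fun z => G z i j) y := fun y i j =>
    ((hGC i j).differentiable one_ne_zero) y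
  have hpfun : ∀ j, p j = fun y => ∑ i, G y j i * v y i := fun j => funext (hp j)
  refine ⟨fun t _ j hj => by rw [hv, hlam0 j hj]; rfl, fun t ht k => ?_⟩
  have hreaction : ∑ j : Fin n, (if (j : ℕ) < m then Λ j (x t) * Ω j (x t) k else 0)
      = τ k (x t) := by
    rw [← hΛ]
    refine sum_congr rfl fun j _ => ?_
    split_ifs with hj
    · ring
    · rw [hΛ0 _ j (not_lt.1 hj), mul_zero]
  have henergy : ∑ j, v (x t) j * pd n k (p j) (x t)
      = (1 / 2) * ∑ i, ∑ j, pd n k (fun y => G y i j) (x t) * v (x t) i * v (x t) j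
        + pd n k (fun y => (1 / 2) * ∑ i, ∑ j, v y i * G y i j * v y j) (x t) := by
    simp only [hpfun]
    exact sum_mul_fderiv_mulVec_eq_fderiv_half_quadForm (hGd _) (hvd _) (.ext fun i j => hGsymm _ j i)
  have hchain : HasDerivAt (fun s => p k (x s)) (fderiv ℝ (p k) (x t) (v (x t))) t := by
    refine (DifferentiableAt.hasFDerivAt ?_).comp_hasDerivAt t (hx t ht)
    rw [hpfun]
    exact .fun_sum fun i _ => (hGd _ k i).mul (hvd _ i)
  convert hchain using 1
  rw [hreaction, hτ, fderiv_apply_eq_sum_pd, ← henergy, ← sum_add_distrib]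
  exact sum_congr rfl fun j _ => by ring

/-- Theorem 1 (Cartesian approach): the first-order system `ẋ = v(x)`, under the
conditions `Λ_j = 0` for `j > M`, is an invariant relationship of the second-order
constrained Lagrangian equations. -/
theorem cartesian_approach_main
    (n m : ℕ) (hn : 2 ≤ n) (hm1 : 1 ≤ m) (hmn : m < n)
    -- the Riemann metric G, C¹, symmetric, invertible
    (G : (Fin n → ℝ) → Matrix (Fin n) (Fin n) ℝ)
    (hGC : ∀ i j, ContDiff ℝ 1 (fun x => G x i j))
    (hGsymm : ∀ x i j, G x i j = G x j i)
    (hGinv : ∀ x, (G x).det ≠ 0)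
    -- the 1-forms Ω_j, C¹, with the matrix M(x) whose j-th row is Ω_j(x) invertible
    (Ω : Fin n → (Fin n → ℝ) → (Fin n → ℝ))
    (hΩC : ∀ j, ContDiff ℝ 1 (Ω j))
    (hMinv : ∀ x, (Matrix.of fun j k => Ω j x k).det ≠ 0)
    -- the functions λ_j : zero for j ≤ M, C¹ for j > M
    (lam : Fin n → (Fin n → ℝ) → ℝ)
    (hlam0 : ∀ j : Fin n, (j : ℕ) < m → lam j = 0)
    (hlamC : ∀ j : Fin n, m ≤ (j : ℕ) → ContDiff ℝ 1 (lam j))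
    -- the Cartesian vector field v = M(x)⁻¹ λ(x), i.e. ⟨Ω_j(x), v(x)⟩ = λ_j(x)
    (v : (Fin n → ℝ) → (Fin n → ℝ))
    (hvC : ContDiff ℝ 1 v)
    (hv : ∀ x, ∀ j : Fin n, (∑ k, Ω j x k * v x k) = lam j x)
    -- the momentum p = G v
    (p : Fin n → (Fin n → ℝ) → ℝ)
    (hp : ∀ k x, p k x = ∑ j, G x k j * v x j)
    -- τ_k = Σ_j v_j (∂_j p_k − ∂_k p_j)
    (τ : Fin n → (Fin n → ℝ) → ℝ)
    (hτ : ∀ k x, τ k x = ∑ j, v x j * (pd n j (p k) x - pd n k (p j) x))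
    -- Λ = (M(x)ᵀ)⁻¹ τ(x), i.e. Σ_j (Ω_j(x))_k Λ_j(x) = τ_k(x)
    (Λ : Fin n → (Fin n → ℝ) → ℝ)
    (hΛ : ∀ x, ∀ k : Fin n, (∑ j, Ω j x k * Λ j x) = τ k x)
    -- the invariance condition Λ_j ≡ 0 for j > M
    (hΛ0 : ∀ x, ∀ j : Fin n, m ≤ (j : ℕ) → Λ j x = 0)
    -- a solution of ẋ = v(x) on an open interval
    (t₁ t₂ : ℝ) (x : ℝ → (Fin n → ℝ))
    (hx : ∀ t ∈ Ioo t₁ t₂, HasDerivAt x (v (x t)) t) :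
    -- the constraints ⟨Ω_j(x(t)), ẋ(t)⟩ = 0 hold for j = 1,…,M
    (∀ t ∈ Ioo t₁ t₂, ∀ j : Fin n, (j : ℕ) < m →
      (∑ k, Ω j (x t) k * v (x t) k) = 0) ∧
    -- and the Lagrange-type equations hold
    (∀ t ∈ Ioo t₁ t₂, ∀ k : Fin n,
      HasDerivAt (fun s => p k (x s))
        ((1 / 2) * ∑ i, ∑ j, pd n k (fun y => G y i j) (x t) * v (x t) i * v (x t) j
          + pd n k (fun y => (1 / 2) * ∑ i, ∑ j, v y i * G y i j * v y j) (x t)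
          + ∑ j : Fin n, (if (j : ℕ) < m then Λ j (x t) * Ω j (x t) k else 0)) t) :=
  cartesian_approach_main_general n m G hGC hGsymm Ω lam hlam0 v hvC hv p hp τ hτ Λ hΛ hΛ0 t₁ t₂ x
    hx
end
end

section
/- Let v : ℝ^N → ℝ^N be C¹ and define the Lagrangian L : ℝ^N × ℝ^N → ℝ by L(x,u) = ½‖u − v(x)‖² (Euclidean norm). Then a C² curve x : I → ℝ^N satisfies the Euler–Lagrange equations of L, i.e. d/dt[∇_u L(x(t), ẋ(t))] = ∇_x L(x(t), ẋ(t)) for all t, if and only if ẍ(t) = ∇(½‖v‖²)(x(t)) + (Dv(x(t)) − Dv(x(t))ᵀ) ẋ(t) for all t, where Dv denotes the Jacobian matrix of v. In particular, every solution of ẋ = v(x) satisfies the Euler–Lagrange equations of L. -/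
/-!
With `L(x,u) = ½‖u − v(x)‖²` one has `∇ᵤL = u − v(x)` and `∇ₓL = −Dv(x)ᵀ(u − v(x))`. Along a
curve the momentum `ẋ − v(x)` has derivative `ẍ − Dv(x)ẋ`, so, using `∇(½‖v‖²) = Dvᵀv`, the
Euler–Lagrange equations rearrange to `ẍ = Dvᵀv + (Dv − Dvᵀ)ẋ`. On a solution of `ẋ = v(x)`
both the momentum and `∇ₓL` vanish identically.
-/

open Real Set

noncomputable section

/-- Gradient of a scalar function on `ℝ^n`. -/
def grad (n : ℕ) (f : (Fin n → ℝ) → ℝ) (x : Fin n → ℝ) : Fin n → ℝ :=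
  fun k => pd n k f x

section

variable {E ι : Type*} [NormedAddCommGroup E] [NormedSpace ℝ E] [Fintype ι]

theorem hasFDerivAt_half_sum_sq {w : E → ι → ℝ} {w' : E →L[ℝ] ι → ℝ} {y : E}
    (hw : HasFDerivAt w w' y) :
    HasFDerivAt (fun y => 1 / 2 * ∑ i, w y i ^ 2)
      (∑ i, w y i • (ContinuousLinearMap.proj i).comp w') y := by
  have hsum := HasFDerivAt.fun_sum fun i (_ : i ∈ Finset.univ) =>
    ((ContinuousLinearMap.proj (R := ℝ) (φ := fun _ : ι => ℝ) i).hasFDerivAt.comp y hw).pow 2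
  refine (hsum.const_mul (1 / 2 : ℝ)).congr_fderiv ?_
  rw [Finset.smul_sum]
  refine Finset.sum_congr rfl fun i _ => ?_
  rw [smul_smul]
  congr 1
  simp

end

section

variable {n : ℕ} {ι : Type*} [Fintype ι]

theorem pd_eq_of_hasFDerivAt {f : (Fin n → ℝ) → ℝ} {f' : (Fin n → ℝ) →L[ℝ] ℝ}
    {y : Fin n → ℝ} (h : HasFDerivAt f f' y) (k : Fin n) :
    pd n k f y = f' (Pi.single k 1) := by
  rw [pd, h.fderiv]

theorem pd_apply_of_hasFDerivAt {v : (Fin n → ℝ) → ι → ℝ} {v' : (Fin n → ℝ) →L[ℝ] ι → ℝ}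
    {y : Fin n → ℝ} (hv : HasFDerivAt v v' y) (i : ι) (k : Fin n) :
    pd n k (fun y => v y i) y = v' (Pi.single k 1) i :=
  pd_eq_of_hasFDerivAt
    ((ContinuousLinearMap.proj (R := ℝ) (φ := fun _ : ι => ℝ) i).hasFDerivAt.comp y hv) k

theorem pd_half_sum_sq {w : (Fin n → ℝ) → ι → ℝ} {w' : (Fin n → ℝ) →L[ℝ] ι → ℝ}
    {y : Fin n → ℝ} (hw : HasFDerivAt w w' y) (k : Fin n) :
    pd n k (fun y => 1 / 2 * ∑ i, w y i ^ 2) y = ∑ i, w y i * w' (Pi.single k 1) i := by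
  rw [pd_eq_of_hasFDerivAt (hasFDerivAt_half_sum_sq hw)]
  simp

theorem grad_half_sum_sq_sub_const (c u : Fin n → ℝ) :
    grad n (fun u => 1 / 2 * ∑ i, (u i - c i) ^ 2) u = u - c := by
  ext k
  refine (pd_half_sum_sq ((hasFDerivAt_id u).sub_const c) k).trans ?_
  simp [Pi.single_apply]

theorem pd_half_sum_sq_const_sub {v : (Fin n → ℝ) → ι → ℝ} {v' : (Fin n → ℝ) →L[ℝ] ι → ℝ}
    {y : Fin n → ℝ} (hv : HasFDerivAt v v' y) (u : ι → ℝ) (k : Fin n) :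
    pd n k (fun y => 1 / 2 * ∑ i, (u i - v y i) ^ 2) y
      = -∑ i, (u i - v y i) * v' (Pi.single k 1) i := by
  refine (pd_half_sum_sq (hv.const_sub u) k).trans ?_
  simp

omit [Fintype ι] in
theorem ContinuousLinearMap.apply_pi_eq_sum_single {κ : Type*} [Fintype κ] [DecidableEq κ]
    (A : (κ → ℝ) →L[ℝ] ι → ℝ) (p : κ → ℝ) (i : ι) :
    A p i = ∑ j, p j * A (Pi.single j 1) i := by
  conv_lhs => rw [pi_eq_sum_univ' p, map_sum]
  simp [Finset.sum_apply]

/-- The `k`-th coordinate of `−Aᵀ(p − w) = a − Ap ↔ a = Aᵀw + (A − Aᵀ)p`. -/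
theorem neg_transpose_sub_eq_iff (A : (Fin n → ℝ) →L[ℝ] Fin n → ℝ) (a p w : Fin n → ℝ)
    (k : Fin n) :
    -∑ i, (p i - w i) * A (Pi.single k 1) i = a k - A p k ↔
      a k = ∑ i, w i * A (Pi.single k 1) i
        + ∑ j, (A (Pi.single j 1) k - A (Pi.single k 1) j) * p j := by
  simp only [A.apply_pi_eq_sum_single p k, sub_mul, Finset.sum_sub_distrib, mul_comm (p _)]
  constructor <;> intro h <;> linarith

end

/-- The equations produced by the Cartesian approach are the Euler–Lagrange equations of
`L(x,u) = ½‖u − v(x)‖²`: a C² curve satisfies the Euler–Lagrange equations of `L` iff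
`ẍ = ∇(½‖v‖²)(x) + (Dv(x) − Dv(x)ᵀ)ẋ`; in particular every solution of `ẋ = v(x)`
satisfies the Euler–Lagrange equations. -/
theorem lagrangian_of_cartesian_field
    (n : ℕ) (v : (Fin n → ℝ) → (Fin n → ℝ)) (hv : ContDiff ℝ 1 v)
    (L : (Fin n → ℝ) → (Fin n → ℝ) → ℝ)
    (hL : ∀ x u, L x u = (1 / 2) * ∑ i, (u i - v x i) ^ 2)
    -- a C² curve on an open interval, with first derivative x' and second derivative x''
    (t₁ t₂ : ℝ) (x x' x'' : ℝ → (Fin n → ℝ))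
    (hx : ∀ t ∈ Ioo t₁ t₂, HasDerivAt x (x' t) t)
    (hx' : ∀ t ∈ Ioo t₁ t₂, HasDerivAt x' (x'' t) t) :
    -- (a) Euler–Lagrange equations ⟺ the explicit second-order equation
    ((∀ t ∈ Ioo t₁ t₂, ∀ k : Fin n,
        HasDerivAt (fun s => grad n (L (x s)) (x' s) k)
          (grad n (fun y => L y (x' t)) (x t) k) t)
      ↔ (∀ t ∈ Ioo t₁ t₂, ∀ k : Fin n,
          x'' t k = grad n (fun y => (1 / 2) * ∑ i, (v y i) ^ 2) (x t) k
            + ∑ j, (pd n j (fun y => v y k) (x t) - pd n k (fun y => v y j) (x t)) * x' t j))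
    ∧
    -- (b) in particular, every solution of ẋ = v(x) satisfies the Euler–Lagrange equations
    ((∀ t ∈ Ioo t₁ t₂, x' t = v (x t)) →
      ∀ t ∈ Ioo t₁ t₂, ∀ k : Fin n,
        HasDerivAt (fun s => grad n (L (x s)) (x' s) k)
          (grad n (fun y => L y (x' t)) (x t) k) t) := by
  obtain rfl : L = fun x u => 1 / 2 * ∑ i, (u i - v x i) ^ 2 := funext₂ hL
  have hDv : ∀ y, HasFDerivAt v (fderiv ℝ v y) y := fun y =>
    (hv.differentiable one_ne_zero y).hasFDerivAt
  have momentum : ∀ s, grad n (fun u => 1 / 2 * ∑ i, (u i - v (x s) i) ^ 2) (x' s)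
      = x' s - v (x s) := fun s => grad_half_sum_sq_sub_const _ _
  have momentum_deriv : ∀ t ∈ Ioo t₁ t₂, ∀ k,
      HasDerivAt (fun s => x' s k - v (x s) k) (x'' t k - fderiv ℝ v (x t) (x' t) k) t :=
    fun t ht => hasDerivAt_pi.1 ((hx' t ht).sub ((hDv (x t)).comp_hasDerivAt t (hx t ht)))
  simp only [momentum, Pi.sub_apply]
  simp only [grad, pd_half_sum_sq_const_sub (hDv _), pd_half_sum_sq (hDv _),
    pd_apply_of_hasFDerivAt (hDv _)]
  refine ⟨forall₂_congr fun t ht => forall_congr' fun k => ?_, fun hsol t ht k => ?_⟩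
  · rw [← neg_transpose_sub_eq_iff]
    exact ⟨fun h => h.unique (momentum_deriv t ht k), fun h => h ▸ momentum_deriv t ht k⟩
  · have hzero : (fun s => x' s k - v (x s) k) =ᶠ[nhds t] fun _ => 0 :=
      Filter.eventuallyEq_of_mem (Ioo_mem_nhds ht.1 ht.2) fun s hs => by simp [hsol s hs]
    simpa [hsol t ht] using (hasDerivAt_const t (0 : ℝ)).congr_of_eventuallyEq hzero
end
end

section
/- Let m, I_C > 0 and ε ∈ ℝ; set J = I_C + ε² m and q = √(m/J). Let x, y, z : I → ℝ be C² functions on an open interval I and μ : I → ℝ a continuous function such that on I: I_C ẍ = ε μ, m ÿ = μ sin x, m z̈ = −μ cos x, together with the nonholonomic constraint ε ẋ + (sin x) ẏ − (cos x) ż = 0. Then there exist real constants C and C₁ such that, setting θ(t) = q ε x(t) + C₁, for all t ∈ I: ẋ(t) = q C cos θ(t), ẏ(t) = C( sin θ(t) cos x(t) − q ε cos θ(t) sin x(t) ), ż(t) = C( sin θ(t) sin x(t) + q ε cos θ(t) cos x(t) ). In other words, every inertial trajectory of the Chapliguin–Carathéodory sleigh is a trajectory of this first-order (Cartesian) system.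 -/
/-!
Let `v = ẏ cos x + ż sin x` be the velocity of the centre of mass along the blade; the constraint
fixes the transverse component to `-ε ẋ`. The reaction force is transverse, so `v̇ = ε ẋ²`, and
differentiating the constraint gives `J ẍ = -ε m v ẋ`. With `q² J = m` this says that the plane
vector `(ẋ, q v)` rotates with angular velocity `q ε ẋ`, the derivative of `q ε x`: hence
`(ẋ + i q v) e^{-i q ε x}` is a constant `r e^{i C₁}`, and the claim follows with `C = r / q`.
-/

open Real Set

noncomputable section

open Filter Topology

open Complex in
theorem exists_eq_mul_exp_of_hasDerivAt_eq_mul_I {s : Set ℝ} (hs : IsOpen s)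
    (hs' : IsPreconnected s) {f : ℝ → ℂ} {φ φ' : ℝ → ℝ}
    (hφ : ∀ t ∈ s, HasDerivAt φ (φ' t) t)
    (hf : ∀ t ∈ s, HasDerivAt f (φ' t * I * f t) t) :
    ∃ c : ℂ, ∀ t ∈ s, f t = c * exp (φ t * I) := by
  have hderiv : ∀ t ∈ s, HasDerivAt (fun t => f t * exp (-(φ t * I))) 0 t := by
    intro t ht
    have hexp : HasDerivAt (fun t => exp (-(φ t * I))) (exp (-(φ t * I)) * -(φ' t * I)) t :=
      ((hφ t ht).ofReal_comp.mul_const I).neg.cexp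
    exact ((hf t ht).mul hexp).congr_deriv (by ring)
  obtain ⟨c, hc⟩ := hs.exists_is_const_of_deriv_eq_zero hs'
    (fun t ht => (hderiv t ht).differentiableAt.differentiableWithinAt)
    (fun t ht => (hderiv t ht).deriv)
  refine ⟨c, fun t ht => ?_⟩
  rw [← hc t ht, mul_assoc, ← Complex.exp_add, neg_add_cancel, Complex.exp_zero, mul_one]

theorem exists_eq_cos_sin_of_hasDerivAt_rotation {s : Set ℝ} (hs : IsOpen s)
    (hs' : IsPreconnected s) {u w φ φ' : ℝ → ℝ}
    (hφ : ∀ t ∈ s, HasDerivAt φ (φ' t) t)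
    (hu : ∀ t ∈ s, HasDerivAt u (-(φ' t * w t)) t)
    (hw : ∀ t ∈ s, HasDerivAt w (φ' t * u t) t) :
    ∃ r C₁ : ℝ, ∀ t ∈ s, u t = r * cos (φ t + C₁) ∧ w t = r * sin (φ t + C₁) := by
  have hf : ∀ t ∈ s, HasDerivAt (fun t => (u t + w t * Complex.I : ℂ))
      (φ' t * Complex.I * (u t + w t * Complex.I)) t := fun t ht =>
    ((hu t ht).ofReal_comp.add ((hw t ht).ofReal_comp.mul_const Complex.I)).congr_deriv (by
      push_cast
      linear_combination (-(φ' t * w t : ℂ)) * Complex.I_sq)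
  obtain ⟨c, hc⟩ := exists_eq_mul_exp_of_hasDerivAt_eq_mul_I hs hs' hφ hf
  refine ⟨‖c‖, Complex.arg c, fun t ht => ?_⟩
  have hpolar : (u t + w t * Complex.I : ℂ) =
      ‖c‖ * Complex.exp ((φ t + Complex.arg c : ℝ) * Complex.I) := by
    rw [hc t ht]
    nth_rewrite 1 [← Complex.norm_mul_exp_arg_mul_I c]
    push_cast
    rw [mul_assoc, ← Complex.exp_add]
    ring_nf
  constructor
  · simpa only [Complex.add_re, Complex.ofReal_re, Complex.re_ofReal_mul, Complex.mul_I_re,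
      Complex.ofReal_im, neg_zero, add_zero, Complex.exp_ofReal_mul_I_re]
      using congrArg Complex.re hpolar
  · simpa only [Complex.add_im, Complex.ofReal_re, Complex.im_ofReal_mul, Complex.mul_I_im,
      Complex.ofReal_im, zero_add, Complex.exp_ofReal_mul_I_im]
      using congrArg Complex.im hpolar

namespace Sleigh

def longitudinalSpeed (x y' z' : ℝ → ℝ) (t : ℝ) : ℝ := y' t * cos (x t) + z' t * sin (x t)

variable {m IC ε : ℝ} {x x' x'' y' y'' z' z'' μ : ℝ → ℝ} {t : ℝ}

theorem velocity_eq_of_constraint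
    (hcon : ε * x' t + sin (x t) * y' t - cos (x t) * z' t = 0) :
    y' t = longitudinalSpeed x y' z' t * cos (x t) - ε * x' t * sin (x t) ∧
      z' t = longitudinalSpeed x y' z' t * sin (x t) + ε * x' t * cos (x t) := by
  unfold longitudinalSpeed
  constructor
  · linear_combination (-(y' t)) * sin_sq_add_cos_sq (x t) + sin (x t) * hcon
  · linear_combination (-(z' t)) * sin_sq_add_cos_sq (x t) - cos (x t) * hcon

theorem hasDerivAt_longitudinalSpeed (hm : m ≠ 0) (hx : HasDerivAt x (x' t) t)
    (hy' : HasDerivAt y' (y'' t) t) (hz' : HasDerivAt z' (z'' t) t)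
    (e₂ : m * y'' t = μ t * sin (x t)) (e₃ : m * z'' t = -(μ t * cos (x t)))
    (hcon : ε * x' t + sin (x t) * y' t - cos (x t) * z' t = 0) :
    HasDerivAt (longitudinalSpeed x y' z') (ε * x' t ^ 2) t := by
  refine ((hy'.mul hx.cos).add (hz'.mul hx.sin)).congr_deriv ?_
  refine mul_left_cancel₀ hm ?_
  linear_combination cos (x t) * e₂ + sin (x t) * e₃ - (m * x' t) * hcon

theorem inertia_mul_angularAcceleration_eq (hx : HasDerivAt x (x' t) t)
    (hx' : HasDerivAt x' (x'' t) t) (hy' : HasDerivAt y' (y'' t) t)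
    (hz' : HasDerivAt z' (z'' t) t)
    (e₁ : IC * x'' t = ε * μ t) (e₂ : m * y'' t = μ t * sin (x t))
    (e₃ : m * z'' t = -(μ t * cos (x t)))
    (hcon : ∀ᶠ s in 𝓝 t, ε * x' s + sin (x s) * y' s - cos (x s) * z' s = 0) :
    (IC + ε ^ 2 * m) * x'' t = -(ε * m) * longitudinalSpeed x y' z' t * x' t := by
  have hderiv := ((hx'.const_mul ε).add (hx.sin.mul hy')).sub (hx.cos.mul hz')
  have hzero : ε * x'' t + (cos (x t) * x' t * y' t + sin (x t) * y'' t)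
      - (-sin (x t) * x' t * z' t + cos (x t) * z'' t) = 0 :=
    hderiv.unique ((hasDerivAt_const t (0 : ℝ)).congr_of_eventuallyEq hcon)
  unfold longitudinalSpeed
  linear_combination (m * ε) * hzero - ε * sin (x t) * e₂ + ε * cos (x t) * e₃
    - ε * μ t * sin_sq_add_cos_sq (x t) + e₁

end Sleigh

open Sleigh

theorem sleigh_inertial_trajectories_general
    (m IC ε : ℝ) (hm : 0 < m) (hIC : 0 < IC)
    (J q : ℝ) (hJ : J = IC + ε ^ 2 * m) (hq : q = Real.sqrt (m / J))
    (t₁ t₂ : ℝ)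
    (x x' x'' y' y'' z' z'' μ : ℝ → ℝ)
    (hx : ∀ t ∈ Ioo t₁ t₂, HasDerivAt x (x' t) t)
    (hx' : ∀ t ∈ Ioo t₁ t₂, HasDerivAt x' (x'' t) t)
    (hy' : ∀ t ∈ Ioo t₁ t₂, HasDerivAt y' (y'' t) t)
    (hz' : ∀ t ∈ Ioo t₁ t₂, HasDerivAt z' (z'' t) t)
    -- equations of motion from the d'Alembert–Lagrange principle
    (e₁ : ∀ t ∈ Ioo t₁ t₂, IC * x'' t = ε * μ t)
    (e₂ : ∀ t ∈ Ioo t₁ t₂, m * y'' t = μ t * Real.sin (x t))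
    (e₃ : ∀ t ∈ Ioo t₁ t₂, m * z'' t = -(μ t * Real.cos (x t)))
    -- nonholonomic constraint
    (econ : ∀ t ∈ Ioo t₁ t₂,
      ε * x' t + Real.sin (x t) * y' t - Real.cos (x t) * z' t = 0) :
    ∃ C C₁ : ℝ, ∀ t ∈ Ioo t₁ t₂,
      x' t = q * C * Real.cos (q * ε * x t + C₁) ∧
      y' t = C * (Real.sin (q * ε * x t + C₁) * Real.cos (x t)
        - q * ε * Real.cos (q * ε * x t + C₁) * Real.sin (x t)) ∧
      z' t = C * (Real.sin (q * ε * x t + C₁) * Real.sin (x t)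
        + q * ε * Real.cos (q * ε * x t + C₁) * Real.cos (x t)) := by
  have hJ0 : 0 < J := hJ ▸ by positivity
  have hq0 : 0 < q := hq ▸ sqrt_pos.mpr (div_pos hm hJ0)
  have hqJ : q ^ 2 * J = m := by
    rw [hq, sq_sqrt (div_pos hm hJ0).le, div_mul_cancel₀ m hJ0.ne']
  set v := longitudinalSpeed x y' z' with hv
  have hangular : ∀ t ∈ Ioo t₁ t₂, HasDerivAt x' (-(q * ε * x' t * (q * v t))) t := by
    intro t ht
    refine (hx' t ht).congr_deriv (mul_left_cancel₀ hJ0.ne' ?_)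
    have := inertia_mul_angularAcceleration_eq (hx t ht) (hx' t ht) (hy' t ht) (hz' t ht)
      (e₁ t ht) (e₂ t ht) (e₃ t ht) (eventually_of_mem (isOpen_Ioo.mem_nhds ht) econ)
    rw [← hJ] at this
    linear_combination this + ε * v t * x' t * hqJ
  have hlongitudinal : ∀ t ∈ Ioo t₁ t₂, HasDerivAt (fun t => q * v t) (q * ε * x' t * x' t) t :=
    fun t ht => ((hasDerivAt_longitudinalSpeed hm.ne' (hx t ht) (hy' t ht) (hz' t ht)
      (e₂ t ht) (e₃ t ht) (econ t ht)).const_mul q).congr_deriv (by ring)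
  obtain ⟨r, C₁, hpolar⟩ := exists_eq_cos_sin_of_hasDerivAt_rotation isOpen_Ioo
    isPreconnected_Ioo (fun t ht => (hx t ht).const_mul (q * ε)) hangular hlongitudinal
  refine ⟨r / q, C₁, fun t ht => ?_⟩
  obtain ⟨hx't, hvt⟩ := hpolar t ht
  obtain ⟨hy't, hz't⟩ := velocity_eq_of_constraint (econ t ht)
  rw [← hv] at hy't hz't
  have hvt' : v t = r / q * sin (q * ε * x t + C₁) := by
    field_simp
    linear_combination hvt
  refine ⟨by field_simp; exact hx't, ?_, ?_⟩
  · rw [hy't, hvt', hx't]; field_simp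
  · rw [hz't, hvt', hx't]; field_simp

/-- Every inertial trajectory of the Chapliguin–Carathéodory sleigh is a trajectory of
the first-order (Cartesian) system. -/
theorem sleigh_inertial_trajectories
    (m IC ε : ℝ) (hm : 0 < m) (hIC : 0 < IC)
    (J q : ℝ) (hJ : J = IC + ε ^ 2 * m) (hq : q = Real.sqrt (m / J))
    (t₁ t₂ : ℝ)
    (x x' x'' y y' y'' z z' z'' μ : ℝ → ℝ)
    (hμ : ContinuousOn μ (Ioo t₁ t₂))
    (hx : ∀ t ∈ Ioo t₁ t₂, HasDerivAt x (x' t) t)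
    (hx' : ∀ t ∈ Ioo t₁ t₂, HasDerivAt x' (x'' t) t)
    (hy : ∀ t ∈ Ioo t₁ t₂, HasDerivAt y (y' t) t)
    (hy' : ∀ t ∈ Ioo t₁ t₂, HasDerivAt y' (y'' t) t)
    (hz : ∀ t ∈ Ioo t₁ t₂, HasDerivAt z (z' t) t)
    (hz' : ∀ t ∈ Ioo t₁ t₂, HasDerivAt z' (z'' t) t)
    -- equations of motion from the d'Alembert–Lagrange principle
    (e₁ : ∀ t ∈ Ioo t₁ t₂, IC * x'' t = ε * μ t)
    (e₂ : ∀ t ∈ Ioo t₁ t₂, m * y'' t = μ t * Real.sin (x t))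
    (e₃ : ∀ t ∈ Ioo t₁ t₂, m * z'' t = -(μ t * Real.cos (x t)))
    -- nonholonomic constraint
    (econ : ∀ t ∈ Ioo t₁ t₂,
      ε * x' t + Real.sin (x t) * y' t - Real.cos (x t) * z' t = 0) :
    ∃ C C₁ : ℝ, ∀ t ∈ Ioo t₁ t₂,
      x' t = q * C * Real.cos (q * ε * x t + C₁) ∧
      y' t = C * (Real.sin (q * ε * x t + C₁) * Real.cos (x t)
        - q * ε * Real.cos (q * ε * x t + C₁) * Real.sin (x t)) ∧
      z' t = C * (Real.sin (q * ε * x t + C₁) * Real.sin (x t)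
        + q * ε * Real.cos (q * ε * x t + C₁) * Real.cos (x t)) :=
  sleigh_inertial_trajectories_general m IC ε hm hIC J q hJ hq t₁ t₂ x x' x'' y' y'' z' z'' μ hx hx'
    hy' hz' e₁ e₂ e₃ econ
end
end

section
/- Let g ∈ ℝ and C₀ ∈ ℝ with C₀ ≠ 0. Let x, y, z : I → ℝ be C² functions on an open interval I and μ : I → ℝ a continuous function such that on I: ẍ = 0, ÿ = g + μ sin x, z̈ = −μ cos x, together with the constraint (sin x) ẏ − (cos x) ż = 0, and suppose ẋ(t₀) = C₀ for some t₀ ∈ I. Then ẋ(t) = C₀ for all t ∈ I, and there exists a real constant C₁ such that for all t ∈ I: ẏ(t) = ( g sin x(t)/C₀ + C₁ ) cos x(t) and ż(t) = ( g sin x(t)/C₀ + C₁ ) sin x(t). Thus all trajectories of Chapliguin's skate with ẋ(t₀) = C₀ ≠ 0 in the uniform force field are trajectories of this first-order (Cartesian) system. -/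
/-!
The skate turns at the constant rate `ẋ = C₀`, since `ẍ = 0`. In the frame turning with it the
velocity `(ẏ, ż)` has no transverse component, by the constraint, and its longitudinal component
`v = cos x · ẏ + sin x · ż` satisfies `v̇ = g cos x`: differentiating, the reaction force `μ` is
normal to the blade and drops out, and the rotation terms are `ẋ` times the constraint. Hence
`v - g sin x / C₀` is a first integral `C₁`, and rotating back gives `(ẏ, ż) = v (cos x, sin x)`.
-/

open Real Set

noncomputable section

theorem IsOpen.eq_of_forall_hasDerivAt_zero {𝕜 G : Type*} [RCLike 𝕜] [NormedAddCommGroup G]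
    [NormedSpace 𝕜 G] {s : Set 𝕜} (hs : IsOpen s) (hs' : IsPreconnected s) {f : 𝕜 → G}
    (hf : ∀ t ∈ s, HasDerivAt f 0 t) {a b : 𝕜} (ha : a ∈ s) (hb : b ∈ s) : f a = f b :=
  hs.is_const_of_deriv_eq_zero hs' (fun t ht => (hf t ht).differentiableAt.differentiableWithinAt)
    (fun t ht => (hf t ht).deriv) ha hb

theorem eq_mul_cos_and_eq_mul_sin_of_sin_mul_sub_cos_mul_eq_zero {θ a b c : ℝ}
    (htrans : sin θ * a - cos θ * b = 0) (hlong : cos θ * a + sin θ * b = c) :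
    a = c * cos θ ∧ b = c * sin θ := by
  have hpyth := sin_sq_add_cos_sq θ
  constructor
  · linear_combination cos θ * hlong + sin θ * htrans - a * hpyth
  · linear_combination sin θ * hlong - cos θ * htrans - b * hpyth

def skateFirstIntegral (g ω : ℝ) (x y' z' : ℝ → ℝ) (t : ℝ) : ℝ :=
  cos (x t) * y' t + sin (x t) * z' t - g * sin (x t) / ω

theorem hasDerivAt_skateFirstIntegral {g ω μ t y'' z'' : ℝ} {x y' z' : ℝ → ℝ} (hω : ω ≠ 0)
    (hx : HasDerivAt x ω t) (hy' : HasDerivAt y' y'' t) (hz' : HasDerivAt z' z'' t)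
    (hy'' : y'' = g + μ * sin (x t)) (hz'' : z'' = -(μ * cos (x t)))
    (hcon : sin (x t) * y' t - cos (x t) * z' t = 0) :
    HasDerivAt (skateFirstIntegral g ω x y' z') 0 t := by
  have hcos : HasDerivAt (fun s => cos (x s)) (-sin (x t) * ω) t := hx.cos
  have hsin : HasDerivAt (fun s => sin (x s)) (cos (x t) * ω) t := hx.sin
  refine (((hcos.mul hy').add (hsin.mul hz')).sub ((hsin.const_mul g).div_const ω)).congr_deriv ?_
  field_simp
  linear_combination (-ω) * hcon + cos (x t) * hy'' + sin (x t) * hz''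

theorem skate_trajectories_general
    (g C₀ : ℝ) (hC₀ : C₀ ≠ 0)
    (t₁ t₂ : ℝ)
    (x x' x'' y' y'' z' z'' μ : ℝ → ℝ)
    (hx : ∀ t ∈ Ioo t₁ t₂, HasDerivAt x (x' t) t)
    (hx' : ∀ t ∈ Ioo t₁ t₂, HasDerivAt x' (x'' t) t)
    (hy' : ∀ t ∈ Ioo t₁ t₂, HasDerivAt y' (y'' t) t)
    (hz' : ∀ t ∈ Ioo t₁ t₂, HasDerivAt z' (z'' t) t)
    -- equations of motion
    (e₁ : ∀ t ∈ Ioo t₁ t₂, x'' t = 0)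
    (e₂ : ∀ t ∈ Ioo t₁ t₂, y'' t = g + μ t * Real.sin (x t))
    (e₃ : ∀ t ∈ Ioo t₁ t₂, z'' t = -(μ t * Real.cos (x t)))
    -- constraint
    (econ : ∀ t ∈ Ioo t₁ t₂, Real.sin (x t) * y' t - Real.cos (x t) * z' t = 0)
    (t₀ : ℝ) (ht₀ : t₀ ∈ Ioo t₁ t₂) (hinit : x' t₀ = C₀) :
    (∀ t ∈ Ioo t₁ t₂, x' t = C₀) ∧
    ∃ C₁ : ℝ, ∀ t ∈ Ioo t₁ t₂,
      y' t = (g * Real.sin (x t) / C₀ + C₁) * Real.cos (x t) ∧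
      z' t = (g * Real.sin (x t) / C₀ + C₁) * Real.sin (x t) := by
  have hx'_const : ∀ t ∈ Ioo t₁ t₂, x' t = C₀ := fun t ht =>
    hinit ▸ isOpen_Ioo.eq_of_forall_hasDerivAt_zero isPreconnected_Ioo
      (fun s hs => e₁ s hs ▸ hx' s hs) ht ht₀
  have hw : ∀ t ∈ Ioo t₁ t₂, HasDerivAt (skateFirstIntegral g C₀ x y' z') 0 t := fun t ht =>
    hasDerivAt_skateFirstIntegral hC₀ (hx'_const t ht ▸ hx t ht) (hy' t ht) (hz' t ht)
      (e₂ t ht) (e₃ t ht) (econ t ht)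
  refine ⟨hx'_const, skateFirstIntegral g C₀ x y' z' t₀, fun t ht => ?_⟩
  have hwt := isOpen_Ioo.eq_of_forall_hasDerivAt_zero isPreconnected_Ioo hw ht ht₀
  exact eq_mul_cos_and_eq_mul_sin_of_sin_mul_sub_cos_mul_eq_zero (econ t ht)
    (by rw [← hwt, skateFirstIntegral]; ring)

/-- All trajectories of Chapliguin's skate with `ẋ(t₀) = C₀ ≠ 0` in the uniform force
field are trajectories of the first-order (Cartesian) system. -/
theorem skate_trajectories
    (g C₀ : ℝ) (hC₀ : C₀ ≠ 0)
    (t₁ t₂ : ℝ)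
    (x x' x'' y y' y'' z z' z'' μ : ℝ → ℝ)
    (hμ : ContinuousOn μ (Ioo t₁ t₂))
    (hx : ∀ t ∈ Ioo t₁ t₂, HasDerivAt x (x' t) t)
    (hx' : ∀ t ∈ Ioo t₁ t₂, HasDerivAt x' (x'' t) t)
    (hy : ∀ t ∈ Ioo t₁ t₂, HasDerivAt y (y' t) t)
    (hy' : ∀ t ∈ Ioo t₁ t₂, HasDerivAt y' (y'' t) t)
    (hz : ∀ t ∈ Ioo t₁ t₂, HasDerivAt z (z' t) t)
    (hz' : ∀ t ∈ Ioo t₁ t₂, HasDerivAt z' (z'' t) t)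
    -- equations of motion
    (e₁ : ∀ t ∈ Ioo t₁ t₂, x'' t = 0)
    (e₂ : ∀ t ∈ Ioo t₁ t₂, y'' t = g + μ t * Real.sin (x t))
    (e₃ : ∀ t ∈ Ioo t₁ t₂, z'' t = -(μ t * Real.cos (x t)))
    -- constraint
    (econ : ∀ t ∈ Ioo t₁ t₂, Real.sin (x t) * y' t - Real.cos (x t) * z' t = 0)
    (t₀ : ℝ) (ht₀ : t₀ ∈ Ioo t₁ t₂) (hinit : x' t₀ = C₀) :
    (∀ t ∈ Ioo t₁ t₂, x' t = C₀) ∧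
    ∃ C₁ : ℝ, ∀ t ∈ Ioo t₁ t₂,
      y' t = (g * Real.sin (x t) / C₀ + C₁) * Real.cos (x t) ∧
      z' t = (g * Real.sin (x t) / C₀ + C₁) * Real.sin (x t) :=
  skate_trajectories_general g C₀ hC₀ t₁ t₂ x x' x'' y' y'' z' z'' μ hx hx' hy' hz' e₁ e₂ e₃ econ t₀
    ht₀ hinit
end
end

section
/- Let N ≥ 2, let ν, S : ℝ^N → ℝ be C² functions and f₁, …, f_{N−1} : ℝ^N → ℝ be C¹ functions, and suppose there exists a C¹ function h : ℝ^{N−1} → ℝ such that, as an identity between vector fields on ℝ^N, ⟨∇(ν²), ∇S⟩ ∇S − ‖∇S‖² ∇(ν²) = −2 ∇( h(f₁, …, f_{N−1}) ). Then the force field generating the flow ẋ = ν(x) ∇S(x) is potential: every solution x : I → ℝ^N of ẋ = ν(x) ∇S(x) satisfies ẍ(t) = ∇U(x(t)) for all t, where U = ½ ν² ‖∇S‖² − h(f₁, …, f_{N−1}). -/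
open Real Set

noncomputable section

/-- Euclidean inner product on `ℝ^n`. -/
def dot (n : ℕ) (a b : Fin n → ℝ) : ℝ := ∑ i, a i * b i

/-- Squared Euclidean norm on `ℝ^n`. -/
def nsq (n : ℕ) (a : Fin n → ℝ) : ℝ := ∑ i, a i ^ 2

/-! Along a solution, `ẍ = (Dv) v = ∇(½‖v‖²) + (Dv − Dvᵀ) v`. For `v = ν ∇S` the Hessian of `S` is
symmetric, so only `∇S ⊗ ∇ν` contributes to `Dv − Dvᵀ`, and
`(Dv − Dvᵀ) v = ½ (⟨∇(ν²), ∇S⟩ ∇S − ‖∇S‖² ∇(ν²))`, which the compatibility condition turns into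
`−∇ h(f₁, …, f_{N−1})`. -/

section

variable {n : ℕ} {f g : (Fin n → ℝ) → ℝ} {x : Fin n → ℝ}

theorem fderiv_apply_eq_dot_grad (f : (Fin n → ℝ) → ℝ) (x u : Fin n → ℝ) :
    fderiv ℝ f x u = dot n u (grad n f x) := by
  calc fderiv ℝ f x u = fderiv ℝ f x (∑ i, u i • Pi.single i 1) := by
        congr; ext j; simp [Pi.single_apply]
    _ = dot n u (grad n f x) := by simp [dot, grad, pd]

theorem pd_mul (hf : DifferentiableAt ℝ f x) (hg : DifferentiableAt ℝ g x) (k : Fin n) :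
    pd n k (fun y => f y * g y) x = f x * pd n k g x + g x * pd n k f x := by
  simp [pd, fderiv_fun_mul hf hg]

theorem pd_const_mul (hf : DifferentiableAt ℝ f x) (c : ℝ) (k : Fin n) :
    pd n k (fun y => c * f y) x = c * pd n k f x := by
  simp [pd, fderiv_const_mul hf]

theorem pd_sq (hf : DifferentiableAt ℝ f x) (k : Fin n) :
    pd n k (fun y => f y ^ 2) x = 2 * f x * pd n k f x := by
  simp [pd, fderiv_fun_pow 2 hf]

theorem pd_sub (hf : DifferentiableAt ℝ f x) (hg : DifferentiableAt ℝ g x) (k : Fin n) :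
    pd n k (fun y => f y - g y) x = pd n k f x - pd n k g x := by
  simp [pd, fderiv_fun_sub hf hg]

theorem pd_sum {ι : Type*} {s : Finset ι} {F : ι → (Fin n → ℝ) → ℝ}
    (hF : ∀ i ∈ s, DifferentiableAt ℝ (F i) x) (k : Fin n) :
    pd n k (fun y => ∑ i ∈ s, F i y) x = ∑ i ∈ s, pd n k (F i) x := by
  simp [pd, fderiv_fun_sum hF]

theorem differentiable_pd (hf : ContDiff ℝ 2 f) (k : Fin n) : Differentiable ℝ (pd n k f) :=
  ((hf.fderiv_right (m := 1) le_rfl).clm_apply contDiff_const).differentiable one_ne_zero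

theorem differentiable_nsq_grad (hf : ContDiff ℝ 2 f) :
    Differentiable ℝ (fun y => nsq n (grad n f y)) := by
  have := differentiable_pd hf
  unfold nsq grad
  fun_prop

theorem pd_pd_comm (hf : ContDiffAt ℝ 2 f x) (i k : Fin n) :
    pd n i (pd n k f) x = pd n k (pd n i f) x := by
  have hf' : DifferentiableAt ℝ (fderiv ℝ f) x :=
    (hf.fderiv_right (m := 1) le_rfl).differentiableAt one_ne_zero
  have hpd : ∀ i k, pd n i (pd n k f) x = fderiv ℝ (fderiv ℝ f) x (Pi.single i 1) (Pi.single k 1) :=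
    fun i k => by
      change fderiv ℝ (fun y => fderiv ℝ f y (Pi.single k 1)) x (Pi.single i 1) = _
      simp [fderiv_clm_apply hf' (differentiableAt_const _)]
  rw [hpd, hpd]
  exact hf.isSymmSndFDerivAt (by simp) _ _

theorem pd_nsq_grad (hf : ContDiff ℝ 2 f) (k : Fin n) :
    pd n k (fun y => nsq n (grad n f y)) x = 2 * dot n (grad n f x) (grad n (pd n k f) x) := by
  simp only [nsq, grad]
  rw [pd_sum (F := fun i y => pd n i f y ^ 2)
    fun i _ => ((differentiable_pd hf i).pow 2).differentiableAt]
  simp only [pd_sq (differentiable_pd hf _ _), pd_pd_comm hf.contDiffAt k, dot, grad, Finset.mul_sum]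
  exact Finset.sum_congr rfl fun i _ => by ring

theorem hasDerivAt_comp_dot_grad {g : (Fin n → ℝ) → ℝ} {γ : ℝ → Fin n → ℝ}
    {u : Fin n → ℝ} {t : ℝ} (hg : DifferentiableAt ℝ g (γ t)) (hγ : HasDerivAt γ u t) :
    HasDerivAt (fun s => g (γ s)) (dot n u (grad n g (γ t))) t := by
  rw [← fderiv_apply_eq_dot_grad]
  exact hg.hasFDerivAt.comp_hasDerivAt t hγ

theorem dot_grad_velocity_component {ν S : (Fin n → ℝ) → ℝ}
    (hν : DifferentiableAt ℝ ν x) (hS : ContDiff ℝ 2 S) (k : Fin n) :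
    dot n (fun i => ν x * grad n S x i) (grad n (fun y => ν y * pd n k S y) x)
      = pd n k (fun y => 1 / 2 * ν y ^ 2 * nsq n (grad n S y)) x
        + 1 / 2 * (dot n (grad n (fun y => ν y ^ 2) x) (grad n S x) * grad n S x k
          - nsq n (grad n S x) * grad n (fun y => ν y ^ 2) x k) := by
  have hν2 : DifferentiableAt ℝ (fun y => ν y ^ 2) x := by fun_prop
  rw [pd_mul (hν2.const_mul (1 / 2)) (differentiable_nsq_grad hS x), pd_const_mul hν2, pd_nsq_grad hS]
  simp only [dot, nsq, grad, pd_sq hν, pd_mul hν (differentiable_pd hS k x), Finset.mul_sum, Finset.sum_mul,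
    ← Finset.sum_sub_distrib, ← Finset.sum_add_distrib]
  exact Finset.sum_congr rfl fun i _ => by ring

end

theorem joukovski_potential_general
    (n : ℕ)
    (ν S : (Fin n → ℝ) → ℝ) (hν : ContDiff ℝ 2 ν) (hS : ContDiff ℝ 2 S)
    (f : Fin (n - 1) → (Fin n → ℝ) → ℝ) (hf : ∀ j, ContDiff ℝ 1 (f j))
    (h : (Fin (n - 1) → ℝ) → ℝ) (hh : ContDiff ℝ 1 h)
    (hcomp : ∀ x, ∀ k : Fin n,
      dot n (grad n (fun y => ν y ^ 2) x) (grad n S x) * grad n S x k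
        - nsq n (grad n S x) * grad n (fun y => ν y ^ 2) x k
        = -2 * pd n k (fun y => h (fun j => f j y)) x)
    (v : (Fin n → ℝ) → (Fin n → ℝ))
    (hv : ∀ x, v x = fun k => ν x * grad n S x k)
    (U : (Fin n → ℝ) → ℝ)
    (hU : ∀ x, U x = (1 / 2) * ν x ^ 2 * nsq n (grad n S x) - h (fun j => f j x))
    (t₁ t₂ : ℝ) (x : ℝ → (Fin n → ℝ))
    (hx : ∀ t ∈ Ioo t₁ t₂, HasDerivAt x (v (x t)) t) :
    ∀ t ∈ Ioo t₁ t₂, HasDerivAt (fun s => v (x s)) (grad n U (x t)) t := by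
  obtain rfl : v = fun y k => ν y * grad n S y k := funext hv
  obtain rfl : U = fun y => 1 / 2 * ν y ^ 2 * nsq n (grad n S y) - h (fun j => f j y) :=
    funext hU
  have hν' : Differentiable ℝ ν := hν.differentiable two_ne_zero
  have hhf : Differentiable ℝ (fun y => h (fun j => f j y)) :=
    (hh.comp (contDiff_pi.2 hf)).differentiable one_ne_zero
  have hkin : Differentiable ℝ (fun y => 1 / 2 * ν y ^ 2 * nsq n (grad n S y)) :=
    ((hν'.pow 2).const_mul _).mul (differentiable_nsq_grad hS)
  intro t ht
  refine hasDerivAt_pi.2 fun k => ?_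
  refine (hasDerivAt_comp_dot_grad (g := fun y => ν y * pd n k S y)
    ((hν' _).mul (differentiable_pd hS k _)) (hx t ht)).congr_deriv ?_
  dsimp only
  rw [dot_grad_velocity_component (hν' _) hS, hcomp, grad, pd_sub (hkin _) (hhf _)]
  ring

/-- Generalized Joukovski inverse problem: under the compatibility condition
`⟨∇(ν²),∇S⟩∇S − ‖∇S‖²∇(ν²) = −2∇(h(f₁,…,f_{N−1}))`, every solution of
`ẋ = ν(x)∇S(x)` satisfies `ẍ = ∇U(x)` with `U = ½ν²‖∇S‖² − h(f₁,…,f_{N−1})`. -/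
theorem joukovski_potential
    (n : ℕ) (hn : 2 ≤ n)
    (ν S : (Fin n → ℝ) → ℝ) (hν : ContDiff ℝ 2 ν) (hS : ContDiff ℝ 2 S)
    (f : Fin (n - 1) → (Fin n → ℝ) → ℝ) (hf : ∀ j, ContDiff ℝ 1 (f j))
    (h : (Fin (n - 1) → ℝ) → ℝ) (hh : ContDiff ℝ 1 h)
    (hcomp : ∀ x, ∀ k : Fin n,
      dot n (grad n (fun y => ν y ^ 2) x) (grad n S x) * grad n S x k
        - nsq n (grad n S x) * grad n (fun y => ν y ^ 2) x k
        = -2 * pd n k (fun y => h (fun j => f j y)) x)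
    (v : (Fin n → ℝ) → (Fin n → ℝ))
    (hv : ∀ x, v x = fun k => ν x * grad n S x k)
    (U : (Fin n → ℝ) → ℝ)
    (hU : ∀ x, U x = (1 / 2) * ν x ^ 2 * nsq n (grad n S x) - h (fun j => f j x))
    (t₁ t₂ : ℝ) (x : ℝ → (Fin n → ℝ))
    (hx : ∀ t ∈ Ioo t₁ t₂, HasDerivAt x (v (x t)) t) :
    ∀ t ∈ Ioo t₁ t₂, HasDerivAt (fun s => v (x s)) (grad n U (x t)) t :=
  joukovski_potential_general n ν S hν hS f hf h hh hcomp v hv U hU t₁ t₂ x hx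
end
end

section
/- Let b ∈ ℝ with b ≠ 0, let j ∈ ℤ, and let K ∈ ℝ. Let J ⊆ ℝ be an interval with 1 + bτ ≠ 0 for all τ ∈ J, and let H : J → ℝ be differentiable and satisfy on J the first-order linear equation b (1 − τ²) H'(τ) + ( (j+1) b τ + j + 3 ) H(τ) + 2 K (1 + bτ)^j = 0. Define Λ(r, τ) = r^{j+1} H(τ) for r > 0 and τ ∈ J. Then for all r > 0 and τ ∈ J: (1 + bτ) ∂_r Λ(r,τ) + ( b (1 − τ²) / r ) ∂_τ Λ(r,τ) + (2/r) Λ(r,τ) = −2 K r^j (1 + bτ)^j. -/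
theorem hasDerivAt_zpow_add_one {𝕜 : Type*} [NontriviallyNormedField 𝕜] (n : ℤ) {x : 𝕜}
    (hx : x ≠ 0) : HasDerivAt (fun y : 𝕜 => y ^ (n + 1)) (((n : 𝕜) + 1) * x ^ n) x := by
  simpa using hasDerivAt_zpow (n + 1) x (Or.inl hx)

/-- On `r ^ (j + 1) * H(τ)` the operator of (B0) is `r ^ j` times the linear part of (B4). -/
theorem compatibility_operator_zpow_mul (b τ h h' : ℝ) (j : ℤ) {r : ℝ} (hr : r ≠ 0) :
    (1 + b * τ) * (((j : ℝ) + 1) * r ^ j * h) + (b * (1 - τ ^ 2) / r) * (r ^ (j + 1) * h')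
        + (2 / r) * (r ^ (j + 1) * h)
      = r ^ j * (b * (1 - τ ^ 2) * h' + (((j : ℝ) + 1) * b * τ + (j : ℝ) + 3) * h) := by
  rw [zpow_add_one₀ hr]
  field_simp
  ring

theorem bertrand_compatibility_general
    (b : ℝ) (j : ℤ) (K : ℝ)
    (J : Set ℝ)
    (H H' : ℝ → ℝ)
    (hH : ∀ τ ∈ J, HasDerivWithinAt H (H' τ) J τ)
    (heq : ∀ τ ∈ J,
      b * (1 - τ ^ 2) * H' τ + (((j : ℝ) + 1) * b * τ + (j : ℝ) + 3) * H τ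
        + 2 * K * (1 + b * τ) ^ j = 0)
    (Λ : ℝ → ℝ → ℝ)
    (hΛ : ∀ r τ, Λ r τ = r ^ (j + 1) * H τ) :
    ∀ r : ℝ, 0 < r → ∀ τ ∈ J,
      ∃ Λr Λτ : ℝ,
        HasDerivAt (fun r' => Λ r' τ) Λr r ∧
        HasDerivWithinAt (fun τ' => Λ r τ') Λτ J τ ∧
        (1 + b * τ) * Λr + (b * (1 - τ ^ 2) / r) * Λτ + (2 / r) * Λ r τ
          = -2 * K * r ^ j * (1 + b * τ) ^ j := by
  obtain rfl : Λ = fun r τ => r ^ (j + 1) * H τ := funext₂ hΛ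
  intro r hr τ hτ
  refine ⟨((j : ℝ) + 1) * r ^ j * H τ, r ^ (j + 1) * H' τ,
    (hasDerivAt_zpow_add_one j hr.ne').mul_const (H τ), (hH τ hτ).const_mul (r ^ (j + 1)), ?_⟩
  rw [compatibility_operator_zpow_mul b τ (H τ) (H' τ) j hr.ne']
  linear_combination r ^ j * heq τ hτ

/-- Bertrand's inverse problem, key computation: if `H` satisfies the first-order linear
equation (B4), then `Λ(r,τ) = r^{j+1} H(τ)` satisfies the compatibility condition (B0)
with `h(f) = −K f^{j+1}/(j+1)`. -/
theorem bertrand_compatibility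
    (b : ℝ) (hb : b ≠ 0) (j : ℤ) (K : ℝ)
    (J : Set ℝ) (hJ : J.OrdConnected)
    (hJb : ∀ τ ∈ J, 1 + b * τ ≠ 0)
    (H H' : ℝ → ℝ)
    (hH : ∀ τ ∈ J, HasDerivWithinAt H (H' τ) J τ)
    (heq : ∀ τ ∈ J,
      b * (1 - τ ^ 2) * H' τ + (((j : ℝ) + 1) * b * τ + (j : ℝ) + 3) * H τ
        + 2 * K * (1 + b * τ) ^ j = 0)
    (Λ : ℝ → ℝ → ℝ)
    (hΛ : ∀ r τ, Λ r τ = r ^ (j + 1) * H τ) :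
    ∀ r : ℝ, 0 < r → ∀ τ ∈ J,
      ∃ Λr Λτ : ℝ,
        HasDerivAt (fun r' => Λ r' τ) Λr r ∧
        HasDerivWithinAt (fun τ' => Λ r τ') Λτ J τ ∧
        (1 + b * τ) * Λr + (b * (1 - τ ^ 2) / r) * Λτ + (2 / r) * Λ r τ
          = -2 * K * r ^ j * (1 + b * τ) ^ j :=
  bertrand_compatibility_general b j K J H H' hH heq Λ hΛ
end

section
/- Let b ∈ ℝ with b ≠ 0, let j ∈ ℤ, and set a = (1 + b)/(2b). Let J ⊆ ℝ be an open interval on which z ≠ 0, z ≠ 1 and z ≠ a, and let H : J → ℝ be twice differentiable and satisfy on J the Heun equation H''(z) + [ (1 − a(1+j) − 1/b)/z + (a(1+j) + 1/b − j)/(z − 1) − j/(z − a) ] H'(z) + [ ( (j² − 1) z − j/b − a (j² − 1) ) / ( z (z − 1)(z − a) ) ] H(z) = 0. Then the function F(z) = [ z (z − 1) H'(z) + (1/(2b)) ( (1 + b − 2bz)(j + 1) + 2 ) H(z) ] · (1 + b − 2bz)^{−j} is constant on J. (Note that 1 + b − 2bz = −2b(z − a) ≠ 0 on J.) -/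
/-!
Write `P z = 1 + b - 2bz = 2b(a - z)` and `G` for the bracket, so that `F = G · P⁻ʲ` and
`F' = P⁻ʲ⁻¹ (G' P - j P' G)`. Clearing denominators, `G' P - j P' G` is `-2b z(z-1)(z-a)` times
the Heun operator applied to `H`; this identity holds for every `a` once `P` is written as
`2b(a - z)`. Hence `F' = 0` on the interval, and `F` is constant there.
-/

open Real Set

noncomputable section

theorem HasDerivAt.mul_zpow_neg_of_deriv_mul_eq {𝕜 : Type*} [NontriviallyNormedField 𝕜]
    {G P : 𝕜 → 𝕜} {g p x : 𝕜} (j : ℤ) (hG : HasDerivAt G g x) (hP : HasDerivAt P p x)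
    (hPx : P x ≠ 0) (h : g * P x = j * p * G x) :
    HasDerivAt (fun y => G y * P y ^ (-j)) 0 x := by
  refine (hG.mul ((hasDerivAt_zpow (-j) (P x) (Or.inl hPx)).comp x hP)).congr_deriv ?_
  have hsplit : P x ^ (-j) = P x ^ (-j - 1) * P x := by rw [← zpow_add_one₀ hPx, sub_add_cancel]
  simp only [Function.comp_apply, Int.cast_neg, hsplit]
  linear_combination P x ^ (-j - 1) * h

theorem hasDerivAt_mul_const_sub (c a z : ℝ) : HasDerivAt (fun y => c * (a - y)) (-c) z := by
  simpa using ((hasDerivAt_id z).const_sub a).const_mul c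

def heunBracket (a b j : ℝ) (H H' : ℝ → ℝ) (z : ℝ) : ℝ :=
  z * (z - 1) * H' z + 1 / (2 * b) * (2 * b * (a - z) * (j + 1) + 2) * H z

theorem hasDerivAt_heunBracket {b : ℝ} (hb : b ≠ 0) (a j : ℝ) {H H' H'' : ℝ → ℝ} {z : ℝ}
    (hH : HasDerivAt H (H' z) z) (hH' : HasDerivAt H' (H'' z) z) :
    HasDerivAt (heunBracket a b j H H')
      (z * (z - 1) * H'' z + (2 * z - 1 + (a - z) * (j + 1) + 1 / b) * H' z - (j + 1) * H z) z := by
  have hcoeff := (((hasDerivAt_mul_const_sub (2 * b) a z).mul_const (j + 1)).add_const 2).const_mul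
    (1 / (2 * b))
  refine ((((hasDerivAt_id z).mul ((hasDerivAt_id z).sub_const 1)).mul hH').add
    (hcoeff.mul hH)).congr_deriv ?_
  simp only [id_eq, Pi.mul_apply]
  field_simp
  ring

theorem heunBracket_deriv_mul_eq {a b j z : ℝ} {H H' H'' : ℝ → ℝ} (hb : b ≠ 0)
    (hz0 : z ≠ 0) (hz1 : z ≠ 1) (hza : z ≠ a)
    (heun : H'' z + ((1 - a * (1 + j) - 1 / b) / z + (a * (1 + j) + 1 / b - j) / (z - 1)
            - j / (z - a)) * H' z
        + (((j ^ 2 - 1) * z - j / b - a * (j ^ 2 - 1)) / (z * (z - 1) * (z - a))) * H z = 0) :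
    (z * (z - 1) * H'' z + (2 * z - 1 + (a - z) * (j + 1) + 1 / b) * H' z - (j + 1) * H z)
        * (2 * b * (a - z))
      = j * (-(2 * b)) * heunBracket a b j H H' z := by
  have hz1' : z - 1 ≠ 0 := sub_ne_zero.mpr hz1
  have hza' : z - a ≠ 0 := sub_ne_zero.mpr hza
  unfold heunBracket
  linear_combination (norm := (field_simp; ring)) (-(2 * b) * (z * (z - 1) * (z - a))) * heun

/-- The functions `F_j` are first integrals of the Heun equation (B7) arising in
Bertrand's inverse problem. -/
theorem heun_first_integral
    (b : ℝ) (hb : b ≠ 0) (j : ℤ) (a : ℝ) (ha : a = (1 + b) / (2 * b))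
    (lo hi : ℝ)
    (hJ : ∀ z ∈ Ioo lo hi, z ≠ 0 ∧ z ≠ 1 ∧ z ≠ a)
    (H H' H'' : ℝ → ℝ)
    (hH : ∀ z ∈ Ioo lo hi, HasDerivAt H (H' z) z)
    (hH' : ∀ z ∈ Ioo lo hi, HasDerivAt H' (H'' z) z)
    -- the Heun equation
    (heun : ∀ z ∈ Ioo lo hi,
      H'' z
        + ((1 - a * (1 + (j : ℝ)) - 1 / b) / z
            + (a * (1 + (j : ℝ)) + 1 / b - (j : ℝ)) / (z - 1)
            - (j : ℝ) / (z - a)) * H' z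
        + ((((j : ℝ) ^ 2 - 1) * z - (j : ℝ) / b - a * ((j : ℝ) ^ 2 - 1))
            / (z * (z - 1) * (z - a))) * H z = 0)
    (F : ℝ → ℝ)
    (hF : ∀ z, F z = (z * (z - 1) * H' z
        + (1 / (2 * b)) * ((1 + b - 2 * b * z) * ((j : ℝ) + 1) + 2) * H z)
        * (1 + b - 2 * b * z) ^ (-j)) :
    ∀ z ∈ Ioo lo hi, ∀ w ∈ Ioo lo hi, F z = F w := by
  have hlin : ∀ y, 1 + b - 2 * b * y = 2 * b * (a - y) := fun y => by
    rw [ha]; field_simp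
  have hFG : F = fun y => heunBracket a b j H H' y * (2 * b * (a - y)) ^ (-j) := by
    funext y; rw [hF, hlin]; rfl
  have hF' : ∀ z ∈ Ioo lo hi, HasDerivAt F 0 z := by
    intro z hz
    obtain ⟨hz0, hz1, hza⟩ := hJ z hz
    rw [hFG]
    have hPz : 2 * b * (a - z) ≠ 0 :=
      mul_ne_zero (mul_ne_zero two_ne_zero hb) (sub_ne_zero.mpr hza.symm)
    exact (hasDerivAt_heunBracket hb a j (hH z hz) (hH' z hz)).mul_zpow_neg_of_deriv_mul_eq j
      (hasDerivAt_mul_const_sub (2 * b) a z) hPz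
      (heunBracket_deriv_mul_eq hb hz0 hz1 hza (heun z hz))
  intro z hz w hw
  exact isOpen_Ioo.is_const_of_deriv_eq_zero isPreconnected_Ioo
    (fun y hy => (hF' y hy).differentiableAt.differentiableWithinAt)
    (fun y hy => (hF' y hy).deriv) hz hw
end
end
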